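/- (Theorem 2.2) For integers n, k ≥ 0 with n - k ≡ 0 (mod 2), λ ∈ ℝ, and x ∈ ℝ, one has ∑_{m=0}^{n} ( (x^n/k!) ∑_{l=0}^{k} C(k,l) (-1)^{k-l} (l - k/2)^m ) λ^{n-m} S₁(n,m) = T_{n,k}(x, x², …, x^{n-k+1}|λ) if n ≥ k, and this sum equals 0 if n < k. -/

import Mathlib

open PowerSeries Finset Nat

/-- The degenerate falling factorial `(x)_{n,λ} = x(x-λ)⋯(x-(n-1)λ)`. -/
noncomputable def dFall (l x : ℝ) (n : ℕ) : ℝ := ∏ i ∈ Finset.range n, (x - i * l)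

/-- The degenerate rising factorial `⟨x⟩_{n,λ} = x(x+λ)⋯(x+(n-1)λ)`. -/
noncomputable def dRise (l x : ℝ) (n : ℕ) : ℝ := ∏ i ∈ Finset.range n, (x + i * l)

/-- The degenerate exponential formal power series `e_λ^x(t) = ∑_{n≥0} (x)_{n,λ} tⁿ/n!`. -/
noncomputable def degExp (l x : ℝ) : PowerSeries ℝ :=
  PowerSeries.mk fun n => dFall l x n / (n ! : ℝ)

/-- Exponential of a formal power series `G` (with zero constant term):
`coeff n (exp G) = ∑_{k=0}^{n} (1/k!) coeff n (G^k)`. -/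
noncomputable def expComp (G : PowerSeries ℝ) : PowerSeries ℝ :=
  PowerSeries.mk fun n =>
    ∑ k ∈ Finset.range (n + 1), (k ! : ℝ)⁻¹ * PowerSeries.coeff n (G ^ k)

/-- The series `∑_{m≥1} x_m (1)_{m,λ} t^m/m!`. -/
noncomputable def degBellSeries (l : ℝ) (x : ℕ → ℝ) : PowerSeries ℝ :=
  PowerSeries.mk fun m => if m = 0 then 0 else x m * dFall l 1 m / (m ! : ℝ)

/-- The degenerate incomplete Bell polynomial `B_{n,k}(x₁,…,x_{n-k+1}|λ)`, defined by
`(1/k!)(∑_{m≥1} x_m (1)_{m,λ} t^m/m!)^k = ∑_{n≥k} B_{n,k}(x₁,…|λ) tⁿ/n!`. -/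
noncomputable def degIncBell (l : ℝ) (x : ℕ → ℝ) (n k : ℕ) : ℝ :=
  (n ! : ℝ) * PowerSeries.coeff n ((k ! : ℝ)⁻¹ • (degBellSeries l x) ^ k)

/-- The degenerate complete Bell polynomial `B_n(x₁,…,x_n|λ)`, defined by
`exp(∑_{i≥1} x_i (1)_{i,λ} t^i/i!) = ∑_{n≥0} B_n(x₁,…,x_n|λ) tⁿ/n!`. -/
noncomputable def degCompBell (l : ℝ) (x : ℕ → ℝ) (n : ℕ) : ℝ :=
  (n ! : ℝ) * PowerSeries.coeff n (expComp (degBellSeries l x))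

/-- The degenerate Stirling numbers of the second kind `S_{2,λ}(n,k)`, defined by
`(1/k!)(e_λ(t)-1)^k = ∑_{n≥k} S_{2,λ}(n,k) tⁿ/n!`. -/
noncomputable def degStirling2 (l : ℝ) (n k : ℕ) : ℝ :=
  (n ! : ℝ) * PowerSeries.coeff n ((k ! : ℝ)⁻¹ • (degExp l 1 - 1) ^ k)

/-- The degenerate Bell polynomials `B_{n,λ}(x)`, defined by
`exp(x(e_λ(t)-1)) = ∑_{n≥0} B_{n,λ}(x) tⁿ/n!`. -/
noncomputable def degBell (l x : ℝ) (n : ℕ) : ℝ :=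
  (n ! : ℝ) * PowerSeries.coeff n (expComp (x • (degExp l 1 - 1)))

/-- The formal power series `log(1+t) = ∑_{n≥1} (-1)^{n+1} tⁿ/n`. -/
noncomputable def logOnePlus : PowerSeries ℝ :=
  PowerSeries.mk fun n => if n = 0 then 0 else (-1) ^ (n + 1) / (n : ℝ)

/-- The (signed) Stirling numbers of the first kind `S₁(n,k)`, defined by
`(1/k!)(log(1+t))^k = ∑_{n≥k} S₁(n,k) tⁿ/n!`. -/
noncomputable def stirling1 (n k : ℕ) : ℝ :=
  (n ! : ℝ) * PowerSeries.coeff n ((k ! : ℝ)⁻¹ • logOnePlus ^ k)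

/-- The series `∑_{m≥1} x_m ((1/2)_{m,λ} - (-1)^m ⟨1/2⟩_{m,λ}) t^m/m!`. -/
noncomputable def centralSeq (l : ℝ) (x : ℕ → ℝ) : PowerSeries ℝ :=
  PowerSeries.mk fun m => if m = 0 then 0 else
    x m * (dFall l (1 / 2) m - (-1) ^ m * dRise l (1 / 2) m) / (m ! : ℝ)

/-- The degenerate central incomplete Bell polynomial `T_{n,k}(x₁,…,x_{n-k+1}|λ)`. -/
noncomputable def degCentIncBell (l : ℝ) (x : ℕ → ℝ) (n k : ℕ) : ℝ :=
  (n ! : ℝ) * PowerSeries.coeff n ((k ! : ℝ)⁻¹ • (centralSeq l x) ^ k)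

/-- The degenerate central factorial numbers of the second kind `T_{2,λ}(n,k)`, defined by
`(1/k!)(e_λ^{1/2}(t) - e_λ^{-1/2}(t))^k = ∑_{n≥k} T_{2,λ}(n,k) tⁿ/n!`. -/
noncomputable def degCentFact2 (l : ℝ) (n k : ℕ) : ℝ :=
  (n ! : ℝ) * PowerSeries.coeff n
    ((k ! : ℝ)⁻¹ • (degExp l (1 / 2) - degExp l (-(1 / 2))) ^ k)

/-- The degenerate central Bell polynomial `B^{(c)}_{n,λ}(x)`, defined by
`exp(x(e_λ^{1/2}(t)-e_λ^{-1/2}(t))) = ∑_{n≥0} B^{(c)}_{n,λ}(x) tⁿ/n!`. -/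
noncomputable def degCentBellPoly (l x : ℝ) (n : ℕ) : ℝ :=
  (n ! : ℝ) * PowerSeries.coeff n
    (expComp (x • (degExp l (1 / 2) - degExp l (-(1 / 2)))))

/-- The degenerate central complete Bell polynomial `B_n^{(c)}(x₁,…,x_n|λ)`. -/
noncomputable def degCentCompBell (l : ℝ) (x : ℕ → ℝ) (n : ℕ) : ℝ :=
  (n ! : ℝ) * PowerSeries.coeff n (expComp (centralSeq l x))

/-- The ordinary incomplete Bell polynomials `B_{n,k}(x₁,…,x_{n-k+1})`, defined by
`(1/k!)(∑_{m≥1} x_m t^m/m!)^k = ∑_{n≥k} B_{n,k}(x₁,…) tⁿ/n!`. -/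
noncomputable def incBell (x : ℕ → ℝ) (n k : ℕ) : ℝ :=
  (n ! : ℝ) * PowerSeries.coeff n
    ((k ! : ℝ)⁻¹ • (PowerSeries.mk fun m => if m = 0 then 0 else x m / (m ! : ℝ)) ^ k)

/-- The set of tuples `(i₁,…,i_{n-k+1})` of nonnegative integers with
`i₁+⋯+i_{n-k+1} = k` and `i₁+2i₂+⋯+(n-k+1)i_{n-k+1} = n`
(each such `i_j` is at most `n`, so no solution is cut off). -/
noncomputable def partIdx (n k : ℕ) : Finset (Fin (n - k + 1) → ℕ) :=
  (Fintype.piFinset fun _ => Finset.range (n + 1)).filter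
    fun i => (∑ j, i j) = k ∧ (∑ j, (j.1 + 1) * i j) = n

/-- The set of tuples `(m₁,…,m_n)` of nonnegative integers with `m₁+2m₂+⋯+nm_n = n`. -/
noncomputable def partIdx' (n : ℕ) : Finset (Fin n → ℕ) :=
  (Fintype.piFinset fun _ => Finset.range (n + 1)).filter
    fun m => (∑ j, (j.1 + 1) * m j) = n

/-!
Expanding `(j - k/2)^m` against `S₁(n,m)` collapses the inner sum, because
`∑ₘ aᵐ λⁿ⁻ᵐ S₁(n,m) = (a)_{n,λ}`; this follows from the recurrence
`S₁(n+1,m+1) = S₁(n,m) - n S₁(n,m+1)`, which is read off from `(1+t) d/dt log(1+t) = 1`.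
On the other side, for `x_m = xᵐ` the series defining `T_{n,k}` is
`e_λ^{1/2}(xt) - e_λ^{-1/2}(xt)`. The Chu–Vandermonde identity for degenerate falling
factorials gives `e_λ^a e_λ^b = e_λ^{a+b}`, so by the binomial theorem the `k`-th power is
`∑_j C(k,j) (-1)^{k-j} e_λ^{j-k/2}(xt)`, whose `n`-th coefficient is the left-hand side.
For `n < k` this coefficient vanishes because the series has no constant term.
-/

theorem dFall_succ (l a : ℝ) (n : ℕ) : dFall l a (n + 1) = dFall l a n * (a - n * l) :=
  prod_range_succ _ _

theorem dFall_neg (l a : ℝ) (n : ℕ) : dFall l (-a) n = (-1) ^ n * dRise l a n := by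
  rw [dFall, dRise, ← card_range n, ← prod_const, card_range, ← prod_mul_distrib]
  exact prod_congr rfl fun _ _ => by ring

theorem sum_antidiagonal_choose_mul_dFall (l a b : ℝ) (n : ℕ) :
    ∑ ij ∈ antidiagonal n, (n.choose ij.1 : ℝ) * (dFall l a ij.1 * dFall l b ij.2) =
      dFall l (a + b) n := by
  induction n with
  | zero => simp [dFall]
  | succ n ih =>
    rw [sum_antidiagonal_choose_succ_mul (fun i j => dFall l a i * dFall l b j), dFall_succ,
      ← ih, sum_mul, ← sum_add_distrib]
    refine sum_congr rfl fun ij hij => ?_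
    rw [HasAntidiagonal.mem_antidiagonal] at hij
    rw [Nat.choose_symm_of_eq_add hij.symm, dFall_succ, dFall_succ, ← hij]
    push_cast
    ring

theorem degExp_add (l a b : ℝ) : degExp l (a + b) = degExp l a * degExp l b := by
  ext n
  rw [coeff_mul, degExp, coeff_mk, ← sum_antidiagonal_choose_mul_dFall, sum_div]
  refine sum_congr rfl fun ij hij => ?_
  rw [HasAntidiagonal.mem_antidiagonal] at hij
  simp only [degExp, coeff_mk]
  rw [← hij, ← Nat.add_choose_mul_factorial_mul_factorial, Nat.choose_symm_add]
  have := ij.1.factorial_ne_zero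
  have := ij.2.factorial_ne_zero
  have := (Nat.choose_pos (Nat.le_add_left ij.2 ij.1)).ne'
  push_cast
  field_simp

theorem degExp_zero (l : ℝ) : degExp l 0 = 1 := by
  ext n
  cases n with
  | zero => simp [degExp, dFall]
  | succ n => simp [degExp, dFall, prod_range_succ']

theorem degExp_pow (l a : ℝ) (m : ℕ) : degExp l a ^ m = degExp l (m * a) := by
  induction m with
  | zero => simp [degExp_zero]
  | succ m ih => rw [pow_succ, ih, ← degExp_add]; push_cast; ring_nf

theorem degExp_sub_degExp_pow (l a b : ℝ) (k : ℕ) :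
    (degExp l a - degExp l b) ^ k = ∑ j ∈ range (k + 1),
      ((k.choose j : ℝ) * (-1) ^ (k - j)) • degExp l (j * a + (k - j : ℕ) * b) := by
  rw [sub_eq_add_neg, add_pow]
  refine sum_congr rfl fun j _ => ?_
  rw [neg_pow, degExp_pow, degExp_pow, degExp_add, smul_eq_C_mul, map_mul, map_pow, map_neg,
    map_one, map_natCast]
  ring

theorem coeff_pow_eq_zero_of_lt {R : Type*} [CommSemiring R] {f : R⟦X⟧}
    (hf : constantCoeff f = 0) {n k : ℕ} (h : n < k) : coeff n (f ^ k) = 0 :=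
  X_pow_dvd_iff.mp (pow_dvd_pow_of_dvd (X_dvd_iff.mpr hf) k) n h

theorem factorial_mul_coeff_derivative {R : Type*} [CommSemiring R] (f : R⟦X⟧) (n : ℕ) :
    (n ! : R) * coeff n (d⁄dX R f) = ((n + 1)! : R) * coeff (n + 1) f := by
  rw [coeff_derivative, factorial_succ]
  push_cast
  ring

theorem factorial_mul_coeff_X_mul_derivative {R : Type*} [CommSemiring R] (f : R⟦X⟧) (n : ℕ) :
    (n ! : R) * coeff n (X * d⁄dX R f) = n * ((n ! : R) * coeff n f) := by
  cases n with
  | zero => simp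
  | succ n => rw [coeff_succ_X_mul, coeff_derivative]; push_cast [factorial_succ]; ring

theorem constantCoeff_logOnePlus : constantCoeff logOnePlus = 0 := by
  rw [← coeff_zero_eq_constantCoeff_apply, logOnePlus, coeff_mk, if_pos rfl]

theorem one_add_X_mul_derivative_logOnePlus : (1 + X) * d⁄dX ℝ logOnePlus = 1 := by
  ext n
  rw [add_mul, one_mul, map_add, coeff_derivative, coeff_one]
  cases n with
  | zero => simp [logOnePlus]
  | succ n =>
    rw [coeff_succ_X_mul, coeff_derivative]
    simp only [logOnePlus, coeff_mk, if_neg (succ_ne_zero _)]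
    field_simp
    push_cast
    ring

theorem one_add_X_mul_derivative_logOnePlus_pow_div_factorial (m : ℕ) :
    (1 + X) * d⁄dX ℝ (((m + 1)! : ℝ)⁻¹ • logOnePlus ^ (m + 1)) =
      (m ! : ℝ)⁻¹ • logOnePlus ^ m := by
  rw [Derivation.map_smul, derivative_pow, Nat.add_sub_cancel, mul_smul_comm,
    show (1 + X) * (((m + 1 : ℕ) : ℝ⟦X⟧) * logOnePlus ^ m * d⁄dX ℝ logOnePlus) =
      ((m + 1 : ℕ) : ℝ⟦X⟧) * logOnePlus ^ m * ((1 + X) * d⁄dX ℝ logOnePlus) by ring,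
    one_add_X_mul_derivative_logOnePlus, mul_one, ← nsmul_eq_mul, ← Nat.cast_smul_eq_nsmul ℝ,
    smul_smul]
  congr 1
  push_cast [factorial_succ]
  field_simp

theorem stirling1_succ_succ (n m : ℕ) :
    stirling1 (n + 1) (m + 1) = stirling1 n m - n * stirling1 n (m + 1) := by
  have h := congrArg (fun f => (n ! : ℝ) * coeff n f)
    (one_add_X_mul_derivative_logOnePlus_pow_div_factorial m)
  simp only [add_mul, one_mul, map_add, mul_add, factorial_mul_coeff_derivative,
    factorial_mul_coeff_X_mul_derivative] at h
  simp only [stirling1]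
  linarith

theorem stirling1_zero_zero : stirling1 0 0 = 1 := by
  simp [stirling1]

theorem stirling1_succ_zero (n : ℕ) : stirling1 (n + 1) 0 = 0 := by
  simp [stirling1, coeff_one]

theorem stirling1_eq_zero_of_lt {n m : ℕ} (h : n < m) : stirling1 n m = 0 := by
  rw [stirling1, map_smul, coeff_pow_eq_zero_of_lt constantCoeff_logOnePlus h, smul_zero, mul_zero]

theorem sum_pow_mul_stirling1_eq_dFall (l a : ℝ) (n : ℕ) :
    ∑ m ∈ range (n + 1), a ^ m * l ^ (n - m) * stirling1 n m = dFall l a n := by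
  induction n with
  | zero => simp [stirling1_zero_zero, dFall]
  | succ n ih =>
    have shifted : ∑ m ∈ range (n + 1), a ^ (m + 1) * l ^ (n - m) * stirling1 n (m + 1) =
        l * dFall l a n - l ^ (n + 1) * stirling1 n 0 := by
      have h := sum_range_succ' (fun m => a ^ m * l ^ (n + 1 - m) * stirling1 n m) (n + 1)
      rw [sum_range_succ, stirling1_eq_zero_of_lt (lt_add_one n), mul_zero, add_zero] at h
      simp only [Nat.add_sub_add_right, pow_zero, one_mul, Nat.sub_zero] at h
      rw [← ih, mul_sum, eq_sub_iff_add_eq, ← h]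
      refine sum_congr rfl fun m hm => ?_
      rw [Nat.sub_add_comm (mem_range_succ_iff.mp hm)]
      ring
    have hzero : (n : ℝ) * stirling1 n 0 = 0 := by
      cases n with
      | zero => simp
      | succ n => rw [stirling1_succ_zero, mul_zero]
    rw [sum_range_succ', stirling1_succ_zero, mul_zero, add_zero, dFall_succ]
    simp only [Nat.add_sub_add_right, stirling1_succ_succ, mul_sub, sum_sub_distrib]
    calc ∑ m ∈ range (n + 1), a ^ (m + 1) * l ^ (n - m) * stirling1 n m -
          ∑ m ∈ range (n + 1), a ^ (m + 1) * l ^ (n - m) * (n * stirling1 n (m + 1))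
        = a * ∑ m ∈ range (n + 1), a ^ m * l ^ (n - m) * stirling1 n m -
          n * ∑ m ∈ range (n + 1), a ^ (m + 1) * l ^ (n - m) * stirling1 n (m + 1) := by
          simp only [mul_sum]; congr 1 <;> exact sum_congr rfl fun m _ => by ring
      _ = dFall l a n * a - dFall l a n * (n * l) := by
          rw [ih, shifted]; linear_combination l ^ (n + 1) * hzero

theorem centralSeq_pow_eq_rescale (l x : ℝ) :
    centralSeq l (fun m => x ^ m) = rescale x (degExp l (1 / 2) - degExp l (-(1 / 2))) := by
  ext m
  rw [coeff_rescale, centralSeq, coeff_mk, map_sub]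
  simp only [degExp, coeff_mk]
  cases m with
  | zero => simp [dFall]
  | succ m => rw [if_neg (succ_ne_zero _), dFall_neg]; ring

theorem degCentIncBell_eq_zero_of_lt (l : ℝ) (x : ℕ → ℝ) {n k : ℕ} (h : n < k) :
    degCentIncBell l x n k = 0 := by
  have hc : constantCoeff (centralSeq l x) = 0 := by
    rw [← coeff_zero_eq_constantCoeff_apply, centralSeq, coeff_mk, if_pos rfl]
  rw [degCentIncBell, map_smul, coeff_pow_eq_zero_of_lt hc h, smul_zero, mul_zero]

theorem degCentIncBell_pow_eq_sum_dFall (l x : ℝ) (n k : ℕ) :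
    degCentIncBell l (fun m => x ^ m) n k = x ^ n / (k ! : ℝ) * ∑ j ∈ range (k + 1),
      (k.choose j : ℝ) * (-1) ^ (k - j) * dFall l ((j : ℝ) - k / 2) n := by
  rw [degCentIncBell, centralSeq_pow_eq_rescale, ← map_pow, map_smul, coeff_rescale,
    degExp_sub_degExp_pow, map_sum, mul_sum, smul_eq_mul, mul_sum, mul_sum, mul_sum]
  refine sum_congr rfl fun j hj => ?_
  have hjk : j ≤ k := mem_range_succ_iff.mp hj
  have hexp : (j : ℝ) * (1 / 2) + ((k - j : ℕ) : ℝ) * (-(1 / 2)) = j - k / 2 := by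
    rw [Nat.cast_sub hjk]; ring
  have := n.factorial_ne_zero
  rw [map_smul, smul_eq_mul, degExp, coeff_mk, hexp]
  field_simp

theorem sum_stirling1_eq_degCentIncBell_general (l x : ℝ) (n k : ℕ) :
    (∑ m ∈ Finset.range (n + 1),
        (x ^ n / (k ! : ℝ) * ∑ j ∈ Finset.range (k + 1),
            (k.choose j : ℝ) * (-1) ^ (k - j) * ((j : ℝ) - (k : ℝ) / 2) ^ m) *
          l ^ (n - m) * stirling1 n m) =
      if k ≤ n then degCentIncBell l (fun m => x ^ m) n k else 0 := by
  calc _ = x ^ n / (k ! : ℝ) * ∑ j ∈ range (k + 1), (k.choose j : ℝ) * (-1) ^ (k - j) *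
          ∑ m ∈ range (n + 1), ((j : ℝ) - k / 2) ^ m * l ^ (n - m) * stirling1 n m := by
        simp only [mul_sum, sum_mul]
        rw [sum_comm]
        exact sum_congr rfl fun j _ => sum_congr rfl fun m _ => by ring
    _ = degCentIncBell l (fun m => x ^ m) n k := by
        simp only [sum_pow_mul_stirling1_eq_dFall, degCentIncBell_pow_eq_sum_dFall]
    _ = _ := by
        split_ifs with hkn
        · rfl
        · exact degCentIncBell_eq_zero_of_lt l _ (not_le.mp hkn)

/-- Theorem 2.2. -/
theorem sum_stirling1_eq_degCentIncBell (l x : ℝ) (n k : ℕ) (hpar : Even ((n : ℤ) - k)) :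
    (∑ m ∈ Finset.range (n + 1),
        (x ^ n / (k ! : ℝ) * ∑ j ∈ Finset.range (k + 1),
            (k.choose j : ℝ) * (-1) ^ (k - j) * ((j : ℝ) - (k : ℝ) / 2) ^ m) *
          l ^ (n - m) * stirling1 n m) =
      if k ≤ n then degCentIncBell l (fun m => x ^ m) n k else 0 :=
  sum_stirling1_eq_degCentIncBell_general l x n k
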